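/- Let d, d' be positive natural numbers and let W be a real (d' × d) matrix. Define σ_min(W) as the square root of the minimum eigenvalue of the symmetric positive semidefinite matrix Wᵀ·W. Let (Ω, P) be a probability space, let N_i and N_j be nonempty finite index sets, and let (x_k)_{k ∈ N_i} and (x_l)_{l ∈ N_j} be Bochner-integrable random vectors Ω → ℝ^d such that ∫ x_k dP = μ_i for every k ∈ N_i and ∫ x_l dP = μ_j for every l ∈ N_j. Define the random embeddings h_i(ω) = (1/|N_i|) · Σ_{k ∈ N_i} W·x_k(ω) and h_j(ω) = (1/|N_j|) · Σ_{l ∈ N_j} W·x_l(ω). Then ∫ ‖h_i(ω) − h_j(ω)‖ dP(ω) ≥ σ_min(W) · ‖μ_i − μ_j‖. -/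

import Mathlib

open MeasureTheory Matrix

/-- The smallest singular value of a real `d' × d` matrix `W`: the square root of the
minimum eigenvalue of the symmetric positive semidefinite matrix `Wᵀ * W`. -/
noncomputable def sigmaMin {d' d : ℕ} (W : Matrix (Fin d') (Fin d) ℝ) : ℝ :=
  Real.sqrt (⨅ i, (show (Wᵀ * W).IsHermitian by
      rw [← Matrix.conjTranspose_eq_transpose_of_trivial]
      exact Matrix.isHermitian_conjTranspose_mul_self W).eigenvalues i)

section Aux

open scoped RealInnerProductSpace

lemma rayleigh_lower {d : ℕ} (hd : 0 < d) (A : Matrix (Fin d) (Fin d) ℝ)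
    (hA : A.IsHermitian) (v : EuclideanSpace ℝ (Fin d)) :
    (⨅ i, hA.eigenvalues i) * ‖v‖ ^ 2 ≤ ⟪v, Matrix.toEuclideanLin A v⟫ := by
  haveI : Nonempty (Fin d) := ⟨⟨0, hd⟩⟩
  have hsym : (Matrix.toEuclideanLin A).IsSymmetric :=
    Matrix.isHermitian_iff_isSymmetric.mp hA
  set B := hsym.eigenvectorBasis (finrank_euclideanSpace (𝕜 := ℝ) (ι := Fin d)) with hB
  set lam := hsym.eigenvalues (finrank_euclideanSpace (𝕜 := ℝ) (ι := Fin d)) with hlam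
  have hrepr : ∀ i, B.repr (Matrix.toEuclideanLin A v) i = lam i * B.repr v i := fun i =>
    hsym.eigenvectorBasis_apply_self_apply _ v i
  have hinner : ⟪v, Matrix.toEuclideanLin A v⟫ = ∑ i, lam i * (B.repr v i) ^ 2 := by
    rw [← B.repr.inner_map_map v (Matrix.toEuclideanLin A v)]
    simp only [PiLp.inner_apply, RCLike.inner_apply, starRingEnd_apply, star_trivial, hrepr]
    exact Finset.sum_congr rfl fun i _ => by ring
  have hnorm : ‖v‖ ^ 2 = ∑ i, (B.repr v i) ^ 2 := by
    have := B.repr.inner_map_map v v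
    rw [← real_inner_self_eq_norm_sq, ← this]
    simp only [PiLp.inner_apply, RCLike.inner_apply, starRingEnd_apply, star_trivial]
    exact Finset.sum_congr rfl fun i _ => by ring
  -- infimum is a lower bound for each lam i
  have hlb : ∀ i, (⨅ i, hA.eigenvalues i) ≤ lam i := by
    intro i
    have hbdd : BddBelow (Set.range hA.eigenvalues) := Set.Finite.bddBelow (Set.finite_range _)
    have heq : hA.eigenvalues ((Fintype.equivOfCardEq (Fintype.card_fin _)) i) = lam i := by
      simp only [Matrix.IsHermitian.eigenvalues, Matrix.IsHermitian.eigenvalues₀,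
        Equiv.symm_apply_apply, hlam]
    calc (⨅ i, hA.eigenvalues i)
        ≤ hA.eigenvalues ((Fintype.equivOfCardEq (Fintype.card_fin _)) i) := ciInf_le hbdd _
      _ = lam i := heq
  rw [hinner, hnorm, Finset.mul_sum]
  refine Finset.sum_le_sum fun i _ => ?_
  exact mul_le_mul_of_nonneg_right (hlb i) (sq_nonneg _)

lemma sigmaMin_nonneg {d' d : ℕ} (W : Matrix (Fin d') (Fin d) ℝ) : 0 ≤ sigmaMin W :=
  Real.sqrt_nonneg _

lemma norm_toEuclideanLin_ge {d' d : ℕ} (hd : 0 < d) (W : Matrix (Fin d') (Fin d) ℝ)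
    (v : EuclideanSpace ℝ (Fin d)) :
    sigmaMin W * ‖v‖ ≤ ‖Matrix.toEuclideanLin W v‖ := by
  haveI : Nonempty (Fin d) := ⟨⟨0, hd⟩⟩
  have hA : (Wᵀ * W).IsHermitian := by
    rw [← Matrix.conjTranspose_eq_transpose_of_trivial]
    exact Matrix.isHermitian_conjTranspose_mul_self W
  have hPSD : (Wᵀ * W).PosSemidef := by
    rw [← Matrix.conjTranspose_eq_transpose_of_trivial]
    exact Matrix.posSemidef_conjTranspose_mul_self W
  have hlam0 : 0 ≤ ⨅ i, hA.eigenvalues i :=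
    le_ciInf fun i => hPSD.eigenvalues_nonneg i
  -- ‖Wv‖² = ⟪v, (WᵀW) v⟫
  have hdot : ‖Matrix.toEuclideanLin W v‖ ^ 2 = ⟪v, Matrix.toEuclideanLin (Wᵀ * W) v⟫ := by
    rw [← real_inner_self_eq_norm_sq]
    obtain ⟨u, rfl⟩ := (WithLp.equiv 2 (Fin d → ℝ)).symm.surjective v
    change (W *ᵥ u) ⬝ᵥ star (W *ᵥ u) = ((Wᵀ * W) *ᵥ u) ⬝ᵥ star u
    rw [star_trivial, star_trivial, ← Matrix.mulVec_mulVec, dotProduct_comm _ u,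
      dotProduct_mulVec u Wᵀ, Matrix.vecMul_transpose]
  have hray := rayleigh_lower hd (Wᵀ * W) hA v
  have key : (⨅ i, hA.eigenvalues i) * ‖v‖ ^ 2 ≤ ‖Matrix.toEuclideanLin W v‖ ^ 2 := by
    rw [hdot]; exact hray
  have : sigmaMin W * ‖v‖ = Real.sqrt ((⨅ i, hA.eigenvalues i) * ‖v‖ ^ 2) := by
    rw [Real.sqrt_mul hlam0, Real.sqrt_sq (norm_nonneg _)]
    rfl
  rw [this]
  calc Real.sqrt ((⨅ i, hA.eigenvalues i) * ‖v‖ ^ 2)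
      ≤ Real.sqrt (‖Matrix.toEuclideanLin W v‖ ^ 2) := Real.sqrt_le_sqrt key
    _ = ‖Matrix.toEuclideanLin W v‖ := Real.sqrt_sq (norm_nonneg _)

end Aux

/-- Theorem 1: the expected distance between the one-layer mean-aggregation MPNN embeddings
of two nodes is lower bounded by `σ_min(W)` times the distance of the means of their
neighborhood distribution components. -/
theorem expected_embedding_dist_ge {d d' : ℕ} (hd : 0 < d) (hd' : 0 < d')
    (W : Matrix (Fin d') (Fin d) ℝ)
    {Ω : Type*} [MeasurableSpace Ω] (P : Measure Ω) [IsProbabilityMeasure P]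
    {Ni Nj : Type*} [Fintype Ni] [Fintype Nj] [Nonempty Ni] [Nonempty Nj]
    (x : Ni → Ω → EuclideanSpace ℝ (Fin d)) (y : Nj → Ω → EuclideanSpace ℝ (Fin d))
    (μi μj : EuclideanSpace ℝ (Fin d))
    (hx : ∀ k, Integrable (x k) P) (hy : ∀ l, Integrable (y l) P)
    (hxm : ∀ k, ∫ ω, x k ω ∂P = μi) (hym : ∀ l, ∫ ω, y l ω ∂P = μj)
    (hi hj : Ω → EuclideanSpace ℝ (Fin d'))
    (hhi : ∀ ω, hi ω = ((Fintype.card Ni : ℝ))⁻¹ • ∑ k, Matrix.toEuclideanLin W (x k ω))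
    (hhj : ∀ ω, hj ω = ((Fintype.card Nj : ℝ))⁻¹ • ∑ l, Matrix.toEuclideanLin W (y l ω)) :
    ∫ ω, ‖hi ω - hj ω‖ ∂P ≥ sigmaMin W * ‖μi - μj‖ := by
  set L : EuclideanSpace ℝ (Fin d) →L[ℝ] EuclideanSpace ℝ (Fin d') :=
    LinearMap.toContinuousLinearMap (Matrix.toEuclideanLin W) with hL
  have hLapp : ∀ v, L v = Matrix.toEuclideanLin W v := fun v => rfl
  have hix : ∀ k, Integrable (fun ω => L (x k ω)) P := fun k => L.integrable_comp (hx k)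
  have hiy : ∀ l, Integrable (fun ω => L (y l ω)) P := fun l => L.integrable_comp (hy l)
  have hhi' : hi = fun ω => ((Fintype.card Ni : ℝ))⁻¹ • ∑ k, L (x k ω) := funext hhi
  have hhj' : hj = fun ω => ((Fintype.card Nj : ℝ))⁻¹ • ∑ l, L (y l ω) := funext hhj
  have hinti : Integrable hi P := by
    rw [hhi']; exact (integrable_finset_sum _ fun k _ => hix k).smul ((Fintype.card Ni : ℝ))⁻¹
  have hintj : Integrable hj P := by
    rw [hhj']; exact (integrable_finset_sum _ fun l _ => hiy l).smul ((Fintype.card Nj : ℝ))⁻¹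
  have hci : ((Fintype.card Ni : ℝ)) ≠ 0 := by
    exact_mod_cast Fintype.card_ne_zero
  have hcj : ((Fintype.card Nj : ℝ)) ≠ 0 := by
    exact_mod_cast Fintype.card_ne_zero
  have hIi : ∫ ω, hi ω ∂P = L μi := by
    rw [hhi', integral_smul, integral_finset_sum _ fun k _ => hix k]
    have : ∀ k : Ni, ∫ ω, L (x k ω) ∂P = L μi := fun k => by
      rw [L.integral_comp_comm (hx k), hxm k]
    simp only [this, Finset.sum_const, Finset.card_univ, ← Nat.cast_smul_eq_nsmul ℝ, smul_smul,
      inv_mul_cancel₀ hci, one_smul]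
  have hIj : ∫ ω, hj ω ∂P = L μj := by
    rw [hhj', integral_smul, integral_finset_sum _ fun l _ => hiy l]
    have : ∀ l : Nj, ∫ ω, L (y l ω) ∂P = L μj := fun l => by
      rw [L.integral_comp_comm (hy l), hym l]
    simp only [this, Finset.sum_const, Finset.card_univ, ← Nat.cast_smul_eq_nsmul ℝ, smul_smul,
      inv_mul_cancel₀ hcj, one_smul]
  have hInt : ∫ ω, (hi ω - hj ω) ∂P = Matrix.toEuclideanLin W (μi - μj) := by
    rw [integral_sub hinti hintj, hIi, hIj, ← hLapp, ← map_sub]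
  calc ∫ ω, ‖hi ω - hj ω‖ ∂P
      ≥ ‖∫ ω, (hi ω - hj ω) ∂P‖ := norm_integral_le_integral_norm _
    _ = ‖Matrix.toEuclideanLin W (μi - μj)‖ := by rw [hInt]
    _ ≥ sigmaMin W * ‖μi - μj‖ := norm_toEuclideanLin_ge hd W (μi - μj)
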